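/- arXiv:2206.12880 — 5 statements merged into one kernel-verified Lean document; each statement's English description precedes it below -/
import Mathlib

section
/- Let ε ∈ (0,1] and let A be a nonzero real 2×2 matrix satisfying the Cordes condition with parameter ε, i.e. (1+ε)·‖A‖_F² ≤ (tr A)². Set γ := (tr A)/‖A‖_F². Then ‖γ·A − I‖_F ≤ √(1−ε), where I is the 2×2 identity matrix. (In fact ‖γ·A − I‖_F² = 2 − (tr A)²/‖A‖_F² ≤ 1 − ε.) -/
/-- If `ε ∈ (0,1]` and the nonzero real 2×2 matrix `A` satisfies the Cordes
condition `(1+ε)·‖A‖_F² ≤ (tr A)²`, then with `γ := tr A / ‖A‖_F²` one has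
`‖γ·A − I‖_F ≤ √(1−ε)`. -/
theorem frobenius_dist_to_id_le_of_cordes
    (ε : ℝ) (hε0 : 0 < ε) (hε1 : ε ≤ 1)
    (A : Matrix (Fin 2) (Fin 2) ℝ) (hA : A ≠ 0)
    (hCordes : (1 + ε) * (∑ i, ∑ j, (A i j) ^ 2) ≤ (Matrix.trace A) ^ 2) :
    Real.sqrt (∑ i, ∑ j,
        (((Matrix.trace A / ∑ i', ∑ j', (A i' j') ^ 2) • A - 1) i j) ^ 2)
      ≤ Real.sqrt (1 - ε) := by
  have hS : (0:ℝ) < ∑ i, ∑ j, (A i j) ^ 2 := by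
    rcases lt_or_eq_of_le (by positivity : (0:ℝ) ≤ ∑ i, ∑ j, (A i j) ^ 2) with h | h
    · exact h
    · exfalso
      apply hA
      ext i j
      have h0 : ∀ i ∈ (Finset.univ : Finset (Fin 2)), ∀ j ∈ (Finset.univ : Finset (Fin 2)),
          (A i j) ^ 2 = 0 := by
        have := (Finset.sum_eq_zero_iff_of_nonneg (fun i _ => by positivity)).mp h.symm
        intro i _ j _
        exact (Finset.sum_eq_zero_iff_of_nonneg (fun j _ => by positivity)).mp
          (this i (Finset.mem_univ i)) j (Finset.mem_univ j)
      have := h0 i (Finset.mem_univ i) j (Finset.mem_univ j)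
      simpa using pow_eq_zero_iff (n := 2) (by norm_num) |>.mp this
  apply Real.sqrt_le_sqrt
  simp only [Fin.sum_univ_two, Matrix.trace, Matrix.diag, Matrix.sub_apply, Matrix.smul_apply,
    Matrix.one_apply, smul_eq_mul] at *
  set a := A 0 0
  set b := A 0 1
  set c := A 1 0
  set d := A 1 1
  simp only [if_pos rfl, Fin.zero_eq_one_iff, Fin.one_eq_zero_iff] at *
  norm_num
  field_simp
  nlinarith [hS, hCordes, mul_le_mul_of_nonneg_left hCordes hS.le, sq_nonneg (a + d)]
end

section
/- Let ε ∈ (0,1] and let A be a nonzero real 2×2 matrix satisfying the Cordes condition with parameter ε, i.e. (1+ε)·‖A‖_F² ≤ (tr A)². Set γ := (tr A)/‖A‖_F². Then for every real 2×2 matrix M one has |γ·(A:M) − tr M| ≤ √(1−ε)·‖M‖_F. (This is the pointwise form of the property of the Cordes condition: applied with M = D²v(x) it gives |γ A:D²v − Δv| ≤ √(1−ε)|D²v| almost everywhere.) -/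
/-!
With `a = ‖A‖_F²` and `t = tr A`, one has `a · (γ (A:M) − tr M) = (t A − a I) : M`, so by
Cauchy–Schwarz it suffices to bound `‖t A − a I‖_F² = n a² − t² a`; in dimension `n` the Cordes
condition `(n − 1 + ε) a ≤ t²` makes this at most `(1 − ε) a²`.
-/

namespace Matrix

variable {m n : Type*} [Fintype m] [Fintype n]

theorem sum_sum_sq_pos_of_ne_zero {A : Matrix m n ℝ} (hA : A ≠ 0) :
    0 < ∑ i, ∑ j, A i j ^ 2 := by
  obtain ⟨i, j, hij⟩ : ∃ i j, A i j ≠ 0 := by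
    by_contra! h
    exact hA (ext h)
  rw [← Fintype.sum_prod_type' (fun i j => A i j ^ 2)]
  exact Finset.sum_pos' (fun _ _ => sq_nonneg _) ⟨(i, j), Finset.mem_univ _, by positivity⟩

theorem sq_sum_sum_mul_le (B M : Matrix m n ℝ) :
    (∑ i, ∑ j, B i j * M i j) ^ 2 ≤ (∑ i, ∑ j, B i j ^ 2) * ∑ i, ∑ j, M i j ^ 2 := by
  simp only [← Fintype.sum_prod_type' fun i j => B i j * M i j,
    ← Fintype.sum_prod_type' fun i j => B i j ^ 2, ← Fintype.sum_prod_type' fun i j => M i j ^ 2]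
  exact Finset.sum_mul_sq_le_sq_mul_sq _ _ _

variable [DecidableEq n]

theorem sum_sum_smul_sub_smul_one_mul (c d : ℝ) (A M : Matrix n n ℝ) :
    ∑ i, ∑ j, (c • A - d • (1 : Matrix n n ℝ)) i j * M i j =
      c * ∑ i, ∑ j, A i j * M i j - d * M.trace := by
  simp [one_apply, sub_mul, ite_mul, Finset.sum_sub_distrib, Finset.mul_sum, trace, mul_assoc]

theorem sum_sum_sq_smul_sub_smul_one (c d : ℝ) (A : Matrix n n ℝ) :
    ∑ i, ∑ j, (c • A - d • (1 : Matrix n n ℝ)) i j ^ 2 =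
      c ^ 2 * ∑ i, ∑ j, A i j ^ 2 - 2 * c * d * A.trace + d ^ 2 * Fintype.card n := by
  set B := c • A - d • (1 : Matrix n n ℝ)
  have hAB : ∑ i, ∑ j, A i j * B i j = c * ∑ i, ∑ j, A i j ^ 2 - d * A.trace := by
    simp only [mul_comm (A _ _), sq]
    exact sum_sum_smul_sub_smul_one_mul c d A A
  have htrace : B.trace = c * A.trace - d * Fintype.card n := by
    simp [B, trace_sub, trace_smul, trace_one]
  calc ∑ i, ∑ j, B i j ^ 2 = ∑ i, ∑ j, B i j * B i j := by simp only [sq]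
    _ = c * ∑ i, ∑ j, A i j * B i j - d * B.trace := sum_sum_smul_sub_smul_one_mul c d A B
    _ = _ := by rw [hAB, htrace]; ring

theorem abs_div_mul_sub_trace_le_of_cordes (ε : ℝ) {A : Matrix n n ℝ} (hA : A ≠ 0)
    (hCordes : (Fintype.card n - 1 + ε) * ∑ i, ∑ j, A i j ^ 2 ≤ A.trace ^ 2) (M : Matrix n n ℝ) :
    |(A.trace / ∑ i, ∑ j, A i j ^ 2) * (∑ i, ∑ j, A i j * M i j) - M.trace|
      ≤ √(1 - ε) * √(∑ i, ∑ j, M i j ^ 2) := by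
  set a := ∑ i, ∑ j, A i j ^ 2
  set t := A.trace
  set B := t • A - a • (1 : Matrix n n ℝ)
  have ha : 0 < a := sum_sum_sq_pos_of_ne_zero hA
  have hB : ∑ i, ∑ j, B i j ^ 2 ≤ (1 - ε) * a ^ 2 := by
    rw [sum_sum_sq_smul_sub_smul_one]
    nlinarith [mul_le_mul_of_nonneg_left hCordes ha.le]
  have hM : 0 ≤ ∑ i, ∑ j, M i j ^ 2 := by positivity
  rw [← Real.sqrt_mul' _ hM]
  apply Real.abs_le_sqrt
  calc (t / a * ∑ i, ∑ j, A i j * M i j - M.trace) ^ 2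
      = (∑ i, ∑ j, B i j * M i j) ^ 2 / a ^ 2 := by
        rw [sum_sum_smul_sub_smul_one_mul]
        field_simp
    _ ≤ (∑ i, ∑ j, B i j ^ 2) * (∑ i, ∑ j, M i j ^ 2) / a ^ 2 := by
        gcongr
        exact sq_sum_sum_mul_le B M
    _ ≤ (1 - ε) * a ^ 2 * (∑ i, ∑ j, M i j ^ 2) / a ^ 2 := by gcongr
    _ = (1 - ε) * ∑ i, ∑ j, M i j ^ 2 := by field_simp

end Matrix

theorem abs_gamma_frobenius_inner_sub_trace_le_of_cordes_general
    (ε : ℝ)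
    (A : Matrix (Fin 2) (Fin 2) ℝ) (hA : A ≠ 0)
    (hCordes : (1 + ε) * (∑ i, ∑ j, (A i j) ^ 2) ≤ (Matrix.trace A) ^ 2)
    (M : Matrix (Fin 2) (Fin 2) ℝ) :
    |(Matrix.trace A / ∑ i, ∑ j, (A i j) ^ 2) * (∑ i, ∑ j, A i j * M i j) - Matrix.trace M|
      ≤ Real.sqrt (1 - ε) * Real.sqrt (∑ i, ∑ j, (M i j) ^ 2) := by
  refine Matrix.abs_div_mul_sub_trace_le_of_cordes ε hA ?_ M
  rwa [Fintype.card_fin, Nat.cast_ofNat, show (2 : ℝ) - 1 + ε = 1 + ε by ring]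

/-- If `ε ∈ (0,1]` and the nonzero real 2×2 matrix `A` satisfies the Cordes
condition `(1+ε)·‖A‖_F² ≤ (tr A)²`, then with `γ := tr A / ‖A‖_F²` one has, for every real
2×2 matrix `M`, the pointwise Cordes property `|γ·(A:M) − tr M| ≤ √(1−ε)·‖M‖_F`. -/
theorem abs_gamma_frobenius_inner_sub_trace_le_of_cordes
    (ε : ℝ) (hε0 : 0 < ε) (hε1 : ε ≤ 1)
    (A : Matrix (Fin 2) (Fin 2) ℝ) (hA : A ≠ 0)
    (hCordes : (1 + ε) * (∑ i, ∑ j, (A i j) ^ 2) ≤ (Matrix.trace A) ^ 2)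
    (M : Matrix (Fin 2) (Fin 2) ℝ) :
    |(Matrix.trace A / ∑ i, ∑ j, (A i j) ^ 2) * (∑ i, ∑ j, A i j * M i j) - Matrix.trace M|
      ≤ Real.sqrt (1 - ε) * Real.sqrt (∑ i, ∑ j, (M i j) ^ 2) :=
  abs_gamma_frobenius_inner_sub_trace_le_of_cordes_general ε A hA hCordes M
end

section
/- Let 0 < ν ≤ ν̄ and let A be a real symmetric 2×2 matrix that is uniformly elliptic with constants ν, ν̄, i.e. ν·|ξ|² ≤ ξᵀAξ ≤ ν̄·|ξ|² for all ξ ∈ ℝ². Then tr A > 0 and A satisfies the Cordes condition with parameter ε := 2νν̄/(ν² + ν̄²) ∈ (0,1], i.e. ‖A‖_F²/(tr A)² ≤ 1/(1+ε). -/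
/-- If `0 < ν ≤ ν̄` and the real symmetric 2×2 matrix `A` is uniformly
elliptic with constants `ν, ν̄` (i.e. `ν·|ξ|² ≤ ξᵀAξ ≤ ν̄·|ξ|²` for all `ξ ∈ ℝ²`), then
`tr A > 0` and `A` satisfies the Cordes condition with parameter
`ε := 2νν̄/(ν² + ν̄²) ∈ (0,1]`, i.e. `‖A‖_F²/(tr A)² ≤ 1/(1+ε)`. -/
theorem cordes_of_uniformly_elliptic
    (ν ν' : ℝ) (hν : 0 < ν) (hνν' : ν ≤ ν')
    (A : Matrix (Fin 2) (Fin 2) ℝ) (hsymm : A.IsSymm)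
    (hell : ∀ ξ : Fin 2 → ℝ,
      ν * (∑ i, (ξ i) ^ 2) ≤ (∑ i, ∑ j, ξ i * A i j * ξ j) ∧
      (∑ i, ∑ j, ξ i * A i j * ξ j) ≤ ν' * (∑ i, (ξ i) ^ 2)) :
    0 < Matrix.trace A ∧
    0 < 2 * ν * ν' / (ν ^ 2 + ν' ^ 2) ∧
    2 * ν * ν' / (ν ^ 2 + ν' ^ 2) ≤ 1 ∧
    (∑ i, ∑ j, (A i j) ^ 2) / (Matrix.trace A) ^ 2
      ≤ 1 / (1 + 2 * ν * ν' / (ν ^ 2 + ν' ^ 2)) := by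
  have hν' : 0 < ν' := lt_of_lt_of_le hν hνν'
  set a := A 0 0 with ha
  set b := A 0 1 with hb
  set d := A 1 1 with hd
  have hba : A 1 0 = b := hsymm.apply 0 1
  -- diagonal bounds
  have h1 := hell ![1, 0]
  have h2 := hell ![0, 1]
  simp [Fin.sum_univ_two, hba] at h1 h2
  obtain ⟨ha1, ha2⟩ := h1
  obtain ⟨hd1, hd2⟩ := h2
  -- determinant bounds via discriminant
  have hq1 : ∀ t : ℝ, 0 ≤ (a - ν) * (t * t) + (2 * b) * t + (d - ν) := by
    intro t
    have := (hell ![t, 1]).1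
    simp [Fin.sum_univ_two, hba] at this
    nlinarith [this]
  have hq2 : ∀ t : ℝ, 0 ≤ (ν' - a) * (t * t) + (-(2 * b)) * t + (ν' - d) := by
    intro t
    have := (hell ![t, 1]).2
    simp [Fin.sum_univ_two, hba] at this
    nlinarith [this]
  have hdisc1 := discrim_le_zero hq1
  have hdisc2 := discrim_le_zero hq2
  rw [discrim] at hdisc1 hdisc2
  have hb1 : b ^ 2 ≤ (a - ν) * (d - ν) := by nlinarith [hdisc1]
  have hb2 : b ^ 2 ≤ (ν' - a) * (ν' - d) := by nlinarith [hdisc2]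
  have htr : Matrix.trace A = a + d := by
    simp [Matrix.trace, Matrix.diag, Fin.sum_univ_two, ha, hd]
  have htrpos : 0 < Matrix.trace A := by rw [htr]; nlinarith
  have hden : 0 < ν ^ 2 + ν' ^ 2 := by positivity
  refine ⟨htrpos, by positivity, ?_, ?_⟩
  · rw [div_le_one hden]; nlinarith [sq_nonneg (ν - ν')]
  · have heps : 0 < 1 + 2 * ν * ν' / (ν ^ 2 + ν' ^ 2) := by positivity
    have htr2 : (0:ℝ) < (Matrix.trace A) ^ 2 := by positivity
    have hb4 : b ^ 2 * b ^ 2 ≤ ((a - ν) * (d - ν)) * ((ν' - a) * (ν' - d)) := by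
      have h1 : (0:ℝ) ≤ b ^ 2 := sq_nonneg b
      have h2 : (0:ℝ) ≤ (a - ν) * (d - ν) := le_trans h1 hb1
      exact mul_le_mul hb1 hb2 h1 h2
    have hR : 2 * b ^ 2 ≤ (a - ν) * (ν' - a) + (d - ν) * (ν' - d) := by
      nlinarith [hb4, sq_nonneg ((a - ν) * (ν' - a) - (d - ν) * (ν' - d)),
        sq_nonneg ((a - ν) * (ν' - a) + (d - ν) * (ν' - d)), sq_nonneg b,
        mul_nonneg (sub_nonneg.2 ha1) (sub_nonneg.2 ha2),
        mul_nonneg (sub_nonneg.2 hd1) (sub_nonneg.2 hd2)]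
    have hG : 0 ≤ (ν ^ 2 + ν' ^ 2) * (a * d - b ^ 2) - ν * ν' * (a ^ 2 + d ^ 2 + 2 * b ^ 2) := by
      linarith [mul_nonneg (sq_nonneg ν') (sub_nonneg.2 hb1),
        mul_nonneg (sq_nonneg ν) (sub_nonneg.2 hb2),
        mul_nonneg (mul_pos hν hν').le (sub_nonneg.2 hR)]
    rw [div_le_div_iff₀ htr2 heps]
    have hexp : (∑ i, ∑ j, (A i j) ^ 2) = a ^ 2 + b ^ 2 + (b ^ 2 + d ^ 2) := by
      simp [Fin.sum_univ_two, hba]; rfl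
    have heq : 1 + 2 * ν * ν' / (ν ^ 2 + ν' ^ 2)
        = (ν ^ 2 + ν' ^ 2 + 2 * ν * ν') / (ν ^ 2 + ν' ^ 2) := by
      field_simp
    rw [hexp, htr, heq, ← mul_div_assoc, div_le_iff₀ hden, one_mul]
    linarith [hG]
end

section
/- Assume the boundary setup. Then there exist constants C₁ > 0 and C₂ > 0 (depending only on Ω and x) such that for every v : ℝ² → ℝ that is twice continuously differentiable on an open set containing the closure of Ω: ∫_Ω |∇v|² dx ≤ C₁·∫_Ω |D²v|² dx + C₂·∫₀^L |∇v(x(φ))|² dφ. -/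
open MeasureTheory

/-- First partial derivative `∂₁v` of a function `v : ℝ² → ℝ`. -/
noncomputable def pd1 (v : ℝ × ℝ → ℝ) (p : ℝ × ℝ) : ℝ := fderiv ℝ v p (1, 0)

/-- First partial derivative `∂₂v` of a function `v : ℝ² → ℝ`. -/
noncomputable def pd2 (v : ℝ × ℝ → ℝ) (p : ℝ × ℝ) : ℝ := fderiv ℝ v p (0, 1)

/-- Laplacian `Δv = ∂₁₁v + ∂₂₂v`. -/
noncomputable def lap (v : ℝ × ℝ → ℝ) (p : ℝ × ℝ) : ℝ := pd1 (pd1 v) p + pd2 (pd2 v) p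

/-- Squared Frobenius norm of the Hessian, `|D²v|² = (∂₁₁v)² + 2(∂₁₂v)² + (∂₂₂v)²`. -/
noncomputable def hessSq (v : ℝ × ℝ → ℝ) (p : ℝ × ℝ) : ℝ :=
  (pd1 (pd1 v) p) ^ 2 + 2 * (pd1 (pd2 v) p) ^ 2 + (pd2 (pd2 v) p) ^ 2

/-- Squared norm of the gradient, `|∇v|² = (∂₁v)² + (∂₂v)²`. -/
noncomputable def gradSq (v : ℝ × ℝ → ℝ) (p : ℝ × ℝ) : ℝ :=
  (pd1 v p) ^ 2 + (pd2 v p) ^ 2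

/-- The outward normal candidate `n(φ) = (x₂'(φ), −x₁'(φ))` along a curve `x`. -/
noncomputable def normalVec (x : ℝ → ℝ × ℝ) (φ : ℝ) : ℝ × ℝ :=
  ((deriv x φ).2, -(deriv x φ).1)

/-- Curvature `χ(φ) = x₁''(φ)·x₂'(φ) − x₂''(φ)·x₁'(φ)` of an arc-length parametrized curve. -/
noncomputable def curvature (x : ℝ → ℝ × ℝ) (φ : ℝ) : ℝ :=
  (deriv (deriv x) φ).1 * (deriv x φ).2 - (deriv (deriv x) φ).2 * (deriv x φ).1

/-- Boundary setup: `Ω ⊂ ℝ²` bounded open, its boundary parametrized by arc length by a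
`C²`, `L`-periodic curve `x`, injective on `[0,L)`, with outward unit normal
`n = (x₂', −x₁')`. -/
structure BoundarySetup where
  Ω : Set (ℝ × ℝ)
  L : ℝ
  x : ℝ → ℝ × ℝ
  isOpen_Ω : IsOpen Ω
  isBounded_Ω : Bornology.IsBounded Ω
  L_pos : 0 < L
  x_smooth : ContDiff ℝ 2 x
  x_periodic : Function.Periodic x L
  x_injOn : Set.InjOn x (Set.Ico 0 L)
  x_unitSpeed : ∀ φ : ℝ, (deriv x φ).1 ^ 2 + (deriv x φ).2 ^ 2 = 1
  x_image : x '' Set.Icc 0 L = frontier Ω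
  n_outward : ∀ φ : ℝ, ∃ ε₀ > (0 : ℝ), ∀ t ∈ Set.Ioo 0 ε₀,
    x φ - t • normalVec x φ ∈ Ω ∧ x φ + t • normalVec x φ ∉ closure Ω

/-- Oblique field setup: a `C¹`, `L`-periodic unit vector field `ℓ` on the boundary,
together with a `C¹` angle function `θ` so that `ℓ` is the rotation of the outward
normal `n` by the angle `θ`. -/
structure ObliqueSetup extends BoundarySetup where
  ℓ : ℝ → ℝ × ℝ
  θ : ℝ → ℝ
  ℓ_smooth : ContDiff ℝ 1 ℓ
  ℓ_periodic : Function.Periodic ℓ L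
  ℓ_unit : ∀ φ : ℝ, (ℓ φ).1 ^ 2 + (ℓ φ).2 ^ 2 = 1
  θ_smooth : ContDiff ℝ 1 θ
  angle_fst : ∀ φ : ℝ,
    (ℓ φ).1 = (normalVec x φ).1 * Real.cos (θ φ) - (normalVec x φ).2 * Real.sin (θ φ)
  angle_snd : ∀ φ : ℝ,
    (ℓ φ).2 = (normalVec x φ).1 * Real.sin (θ φ) + (normalVec x φ).2 * Real.cos (θ φ)


open MeasureTheory Set intervalIntegral
open scoped ENNReal NNReal

namespace GLH

noncomputable def exitT (Ω : Set (ℝ × ℝ)) (p : ℝ × ℝ) : ℝ :=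
  sInf {u : ℝ | p.2 ≤ u ∧ (p.1, u) ∉ Ω}

variable {Ω : Set (ℝ × ℝ)} {R : ℝ}

lemma exit_set_closed (hΩ : IsOpen Ω) (p : ℝ × ℝ) :
    IsClosed {u : ℝ | p.2 ≤ u ∧ (p.1, u) ∉ Ω} := by
  have : {u : ℝ | p.2 ≤ u ∧ (p.1, u) ∉ Ω} =
      Ici p.2 ∩ (fun u : ℝ => (p.1, u)) ⁻¹' Ωᶜ := by
    ext u
    simp only [Set.mem_setOf_eq, Set.mem_inter_iff, Set.mem_Ici, Set.mem_preimage,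
      Set.mem_compl_iff]
  rw [this]
  exact isClosed_Ici.inter ((hΩ.isClosed_compl).preimage (by fun_prop))

lemma exitT_spec (hΩ : IsOpen Ω) (hbox : Ω ⊆ Icc (-R) R ×ˢ Icc (-R) R)
    {p : ℝ × ℝ} (hp : p ∈ Ω) :
    p.2 < exitT Ω p ∧ exitT Ω p ≤ R + 1 ∧ (p.1, exitT Ω p) ∉ Ω ∧
      ∀ u, p.2 ≤ u → u < exitT Ω p → (p.1, u) ∈ Ω := by
  set A := {u : ℝ | p.2 ≤ u ∧ (p.1, u) ∉ Ω} with hA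
  have hp2 : p.2 ≤ R := (hbox hp).2.2
  have hmem : R + 1 ∈ A := by
    constructor
    · linarith
    · intro h
      have := (hbox h).2.2
      simp at this; linarith
  have hne : A.Nonempty := ⟨R + 1, hmem⟩
  have hbdd : BddBelow A := ⟨p.2, fun u hu => hu.1⟩
  have hτA : exitT Ω p ∈ A := (exit_set_closed hΩ p).csInf_mem hne hbdd
  have hge : p.2 ≤ exitT Ω p := hτA.1
  have hnot : (p.1, exitT Ω p) ∉ Ω := hτA.2
  have hlt : p.2 < exitT Ω p := by
    rcases eq_or_lt_of_le hge with h | h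
    · exfalso; apply hnot; rw [← h]; exact hp
    · exact h
  refine ⟨hlt, csInf_le hbdd hmem, hnot, ?_⟩
  intro u hu1 hu2
  by_contra h
  exact absurd (csInf_le hbdd ⟨hu1, h⟩) (not_le.mpr hu2)

lemma exit_mem_frontier (hΩ : IsOpen Ω) (hbox : Ω ⊆ Icc (-R) R ×ˢ Icc (-R) R)
    {p : ℝ × ℝ} (hp : p ∈ Ω) : (p.1, exitT Ω p) ∈ frontier Ω := by
  obtain ⟨hlt, _, hnot, hmem⟩ := exitT_spec hΩ hbox hp
  rw [hΩ.frontier_eq]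
  refine ⟨?_, hnot⟩
  have h1 : exitT Ω p ∈ closure (Ico p.2 (exitT Ω p)) := by
    rw [closure_Ico (ne_of_lt hlt)]; exact ⟨le_of_lt hlt, le_refl _⟩
  have h2 : (p.1, exitT Ω p) ∈ (fun u : ℝ => (p.1, u)) '' closure (Ico p.2 (exitT Ω p)) :=
    ⟨_, h1, rfl⟩
  have h3 := image_closure_subset_closure_image
    (f := fun u : ℝ => (p.1, u)) (s := Ico p.2 (exitT Ω p)) (by fun_prop)
  refine closure_mono ?_ (h3 h2)
  rintro q ⟨u, hu, rfl⟩
  exact hmem u hu.1 hu.2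


lemma exit_gt_iff (hΩ : IsOpen Ω) (hbox : Ω ⊆ Icc (-R) R ×ˢ Icc (-R) R)
    {p : ℝ × ℝ} (hp : p ∈ Ω) (c : ℝ) :
    c < exitT Ω p ↔ ∀ u ∈ Icc p.2 c, (p.1, u) ∈ Ω := by
  obtain ⟨hlt, _, hnot, hmem⟩ := exitT_spec hΩ hbox hp
  constructor
  · intro h u hu
    exact hmem u hu.1 (lt_of_le_of_lt hu.2 h)
  · intro h
    by_contra hc
    push_neg at hc
    exact hnot (h _ ⟨le_of_lt hlt, hc⟩)

lemma isOpen_seg_set (hΩ : IsOpen Ω) (c : ℝ) :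
    IsOpen {p : ℝ × ℝ | p ∈ Ω ∧ ∀ u ∈ Icc p.2 c, (p.1, u) ∈ Ω} := by
  rw [Metric.isOpen_iff]
  rintro p ⟨hp, hseg⟩
  set K : Set (ℝ × ℝ) := insert p ((fun u : ℝ => (p.1, u)) '' Icc p.2 c) with hK
  have hKc : IsCompact K := (isCompact_Icc.image (by fun_prop)).insert p
  have hKΩ : K ⊆ Ω := by
    rintro q (rfl | ⟨u, hu, rfl⟩)
    · exact hp
    · exact hseg u hu
  obtain ⟨δ, hδ, hth⟩ := hKc.exists_thickening_subset_open hΩ hKΩ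
  refine ⟨δ, hδ, ?_⟩
  intro q hq
  rw [Metric.mem_ball] at hq
  have h1 : dist q.1 p.1 < δ := lt_of_le_of_lt (by rw [Prod.dist_eq]; exact le_max_left _ _) hq
  have h2 : dist q.2 p.2 < δ := lt_of_le_of_lt (by rw [Prod.dist_eq]; exact le_max_right _ _) hq
  have hqΩ : q ∈ Ω := hth (Metric.mem_thickening_iff.mpr ⟨p, mem_insert _ _, hq⟩)
  refine ⟨hqΩ, ?_⟩
  intro u hu
  rcases lt_or_ge u p.2 with h | h
  · apply hth
    rw [Metric.mem_thickening_iff]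
    refine ⟨p, mem_insert _ _, ?_⟩
    have : dist u p.2 < δ := by
      rw [Real.dist_eq, abs_of_nonpos (by linarith)]
      have : dist q.2 p.2 ≥ p.2 - q.2 := by
        rw [Real.dist_eq]
        rcases abs_cases (q.2 - p.2) with ⟨he, _⟩ | ⟨he, _⟩ <;> linarith
      linarith [hu.1]
    calc dist (q.1, u) p = max (dist q.1 p.1) (dist u p.2) := Prod.dist_eq
      _ < δ := max_lt h1 this
  · apply hth
    rw [Metric.mem_thickening_iff]
    refine ⟨(p.1, u), mem_insert_of_mem _ ⟨u, ⟨h, hu.2⟩, rfl⟩, ?_⟩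
    calc dist (q.1, u) (p.1, u) = max (dist q.1 p.1) (dist u u) := Prod.dist_eq
      _ < δ := by rw [dist_self]; exact max_lt h1 hδ


open Classical in
noncomputable def exitMap (Ω : Set (ℝ × ℝ)) (q₀ : ℝ × ℝ) (p : ℝ × ℝ) : ℝ × ℝ :=
  (if p ∈ Ω then p.1 else q₀.1, if p ∈ Ω then exitT Ω p else q₀.2)

lemma exitMap_eq {q₀ p : ℝ × ℝ} (hp : p ∈ Ω) : exitMap Ω q₀ p = (p.1, exitT Ω p) := by
  simp [exitMap, hp]

lemma measurable_exitMap (hΩ : IsOpen Ω) (hbox : Ω ⊆ Icc (-R) R ×ˢ Icc (-R) R)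
    (q₀ : ℝ × ℝ) : Measurable (exitMap Ω q₀) := by
  classical
  apply Measurable.prodMk
  · exact Measurable.ite hΩ.measurableSet measurable_fst measurable_const
  · apply measurable_of_Ioi
    intro c
    have he : (fun p : ℝ × ℝ => if p ∈ Ω then exitT Ω p else q₀.2) ⁻¹' Ioi c =
        {p : ℝ × ℝ | p ∈ Ω ∧ ∀ u ∈ Icc p.2 c, (p.1, u) ∈ Ω} ∪
          (Ωᶜ ∩ {p : ℝ × ℝ | c < q₀.2}) := by
      ext p
      by_cases hp : p ∈ Ω
      · simp only [Set.mem_preimage, Set.mem_Ioi, if_pos hp, Set.mem_union, Set.mem_setOf_eq,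
          Set.mem_inter_iff, Set.mem_compl_iff, hp, not_true, false_and, or_false, true_and]
        exact exit_gt_iff hΩ hbox hp c
      · simp only [Set.mem_preimage, Set.mem_Ioi, if_neg hp, Set.mem_union, Set.mem_setOf_eq,
          Set.mem_inter_iff, Set.mem_compl_iff, hp, not_false_iff, true_and, false_and, false_or,
          if_false, if_neg]
    rw [he]
    exact (isOpen_seg_set hΩ c).measurableSet.union
      (hΩ.isClosed_compl.measurableSet.inter (MeasurableSet.const _))


lemma lintegral_exit_le (hΩ : IsOpen Ω) (hR : 1 ≤ R)
    (hbox : Ω ⊆ Icc (-R) R ×ˢ Icc (-R) R)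
    {L : ℝ} {x : ℝ → ℝ × ℝ} (hx : Continuous x)
    (hlip : LipschitzWith 1 (fun φ => (x φ).1))
    (hfr : frontier Ω ⊆ x '' Icc 0 L)
    {f : ℝ × ℝ → ℝ≥0∞} (hf : Measurable f) (q₀ : ℝ × ℝ) :
    ∫⁻ p in Ω, f (exitMap Ω q₀ p)
      ≤ ENNReal.ofReal (3 * R) * ∫⁻ φ in Icc 0 L, f (x φ) := by
  have hE := measurable_exitMap hΩ hbox q₀
  have key : Measure.map (exitMap Ω q₀) (volume.restrict Ω)
      ≤ ENNReal.ofReal (3 * R) • Measure.map x (volume.restrict (Icc 0 L)) := by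
    rw [Measure.le_iff]
    intro s hs
    rw [Measure.map_apply hE hs, Measure.restrict_apply (hE hs)]
    rw [Measure.smul_apply, Measure.map_apply hx.measurable hs,
      Measure.restrict_apply (hx.measurable hs), smul_eq_mul]
    set B : Set ℝ := x ⁻¹' s ∩ Icc 0 L with hB
    have hsub : exitMap Ω q₀ ⁻¹' s ∩ Ω ⊆ ((fun φ => (x φ).1) '' B) ×ˢ Icc (-R) R := by
      rintro p ⟨hps, hpΩ⟩
      rw [Set.mem_preimage, exitMap_eq hpΩ] at hps
      obtain ⟨φ, hφ, hxφ⟩ := hfr (exit_mem_frontier hΩ hbox hpΩ)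
      constructor
      · refine ⟨φ, ⟨?_, hφ⟩, ?_⟩
        · rw [Set.mem_preimage, hxφ]; exact hps
        · show (x φ).1 = p.1
          rw [hxφ]
      · exact (hbox hpΩ).2
    have h1 : volume (exitMap Ω q₀ ⁻¹' s ∩ Ω)
        ≤ volume ((fun φ => (x φ).1) '' B) * volume (Icc (-R) R) := by
      refine le_trans (measure_mono hsub) ?_
      rw [show (volume : Measure (ℝ × ℝ)) = (volume : Measure ℝ).prod volume from
        Measure.volume_eq_prod ℝ ℝ, Measure.prod_prod]
    have h2 : volume ((fun φ => (x φ).1) '' B) ≤ volume B := by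
      have := hlip.hausdorffMeasure_image_le (by norm_num : (0:ℝ) ≤ 1) B
      rw [MeasureTheory.hausdorffMeasure_real] at this
      simpa using this
    calc volume (exitMap Ω q₀ ⁻¹' s ∩ Ω)
        ≤ volume ((fun φ => (x φ).1) '' B) * volume (Icc (-R) R) := h1
      _ ≤ volume B * ENNReal.ofReal (2 * R) := by
          rw [Real.volume_Icc]
          exact mul_le_mul' h2 (by rw [ENNReal.ofReal_le_ofReal_iff (by linarith)]; ring_nf; rfl)
      _ ≤ ENNReal.ofReal (3 * R) * volume B := by
          rw [mul_comm]
          exact mul_le_mul' (ENNReal.ofReal_le_ofReal (by linarith)) le_rfl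
  calc ∫⁻ p in Ω, f (exitMap Ω q₀ p)
      = ∫⁻ y, f y ∂(Measure.map (exitMap Ω q₀) (volume.restrict Ω)) :=
        (lintegral_map hf hE).symm
    _ ≤ ∫⁻ y, f y ∂(ENNReal.ofReal (3 * R) • Measure.map x (volume.restrict (Icc 0 L))) :=
        lintegral_mono' key le_rfl
    _ = ENNReal.ofReal (3 * R) * ∫⁻ y, f y ∂(Measure.map x (volume.restrict (Icc 0 L))) :=
        lintegral_smul_measure _ _
    _ = ENNReal.ofReal (3 * R) * ∫⁻ φ in Icc 0 L, f (x φ) := by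
        rw [lintegral_map hf hx.measurable]


lemma lintegral_slice_le (hR : 1 ≤ R) (hbox : Ω ⊆ Icc (-R) R ×ˢ Icc (-R) R)
    {H : ℝ × ℝ → ℝ≥0∞} (hH : Measurable H) :
    ∫⁻ p in Ω, (∫⁻ u, H (p.1, u)) ≤ ENNReal.ofReal (3 * R) * ∫⁻ q, H q := by
  have hJ : Measurable fun s : ℝ => ∫⁻ u, H (s, u) := hH.lintegral_prod_right'
  have step1 : ∫⁻ p in Ω, (∫⁻ u, H (p.1, u))
      ≤ ∫⁻ p in Icc (-R) R ×ˢ Icc (-R) R, (∫⁻ u, H (p.1, u)) :=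
    lintegral_mono_set hbox
  have hprodvol : (volume : Measure (ℝ × ℝ)).restrict (Icc (-R) R ×ˢ Icc (-R) R)
      = ((volume : Measure ℝ).restrict (Icc (-R) R)).prod
          ((volume : Measure ℝ).restrict (Icc (-R) R)) := by
    rw [show (volume : Measure (ℝ × ℝ)) = (volume : Measure ℝ).prod volume from
      Measure.volume_eq_prod ℝ ℝ, Measure.prod_restrict]
  have step2 : ∫⁻ p in Icc (-R) R ×ˢ Icc (-R) R, (∫⁻ u, H (p.1, u))
      = ∫⁻ s in Icc (-R) R, (∫⁻ u, H (s, u)) * ENNReal.ofReal (2 * R) := by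
    rw [hprodvol, lintegral_prod (fun p => ∫⁻ u, H (p.1, u))
      ((hJ.comp measurable_fst).aemeasurable)]
    congr 1
    ext s
    simp only []
    rw [setLIntegral_const, Real.volume_Icc]
    congr 1
    ring
  have step3 : ∫⁻ s in Icc (-R) R, (∫⁻ u, H (s, u)) * ENNReal.ofReal (2 * R)
      ≤ ENNReal.ofReal (2 * R) * ∫⁻ s, (∫⁻ u, H (s, u)) := by
    rw [lintegral_mul_const'' _ hJ.aemeasurable]
    rw [mul_comm]
    exact mul_le_mul' le_rfl (lintegral_mono_set (subset_univ _) |>.trans (by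
      rw [Measure.restrict_univ]))
  have step4 : ∫⁻ s, (∫⁻ u, H (s, u)) = ∫⁻ q, H q := by
    rw [show (volume : Measure (ℝ × ℝ)) = (volume : Measure ℝ).prod volume from
      Measure.volume_eq_prod ℝ ℝ, lintegral_prod H hH.aemeasurable]
  calc ∫⁻ p in Ω, (∫⁻ u, H (p.1, u))
      ≤ ∫⁻ p in Icc (-R) R ×ˢ Icc (-R) R, (∫⁻ u, H (p.1, u)) := step1
    _ = ∫⁻ s in Icc (-R) R, (∫⁻ u, H (s, u)) * ENNReal.ofReal (2 * R) := step2
    _ ≤ ENNReal.ofReal (2 * R) * ∫⁻ s, (∫⁻ u, H (s, u)) := step3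
    _ = ENNReal.ofReal (2 * R) * ∫⁻ q, H q := by rw [step4]
    _ ≤ ENNReal.ofReal (3 * R) * ∫⁻ q, H q :=
        mul_le_mul' (ENNReal.ofReal_le_ofReal (by linarith)) le_rfl


lemma pointwise_bound (hΩ : IsOpen Ω) (hR : 1 ≤ R)
    (hbox : Ω ⊆ Icc (-R) R ×ˢ Icc (-R) R)
    {V : Set (ℝ × ℝ)} (hV : IsOpen V) (hcl : closure Ω ⊆ V)
    {w : ℝ × ℝ → ℝ} (hw : ContDiffOn ℝ 1 w V)
    {p : ℝ × ℝ} (hp : p ∈ Ω) :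
    ENNReal.ofReal ((w p) ^ 2)
      ≤ 2 * ENNReal.ofReal ((w (p.1, exitT Ω p)) ^ 2)
        + ENNReal.ofReal (6 * R)
          * ∫⁻ u, Ω.indicator (fun q => ENNReal.ofReal ((pd2 w q) ^ 2)) (p.1, u) := by
  obtain ⟨hlt, hle, hnot, hmem⟩ := exitT_spec hΩ hbox hp
  set τ := exitT Ω p with hτ
  have hseg : ∀ u ∈ Icc p.2 τ, (p.1, u) ∈ V := by
    intro u hu
    rcases lt_or_eq_of_le hu.2 with h | h
    · exact hcl (subset_closure (hmem u hu.1 h))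
    · rw [h]
      exact hcl (exit_mem_frontier hΩ hbox hp).1
  set g' : ℝ → ℝ := fun u => pd2 w (p.1, u) with hg'
  -- derivative along the vertical line
  have hder : ∀ u ∈ Icc p.2 τ, HasDerivAt (fun u => w (p.1, u)) (g' u) u := by
    intro u hu
    have hdiff : DifferentiableAt ℝ w (p.1, u) :=
      (hw.differentiableOn one_ne_zero).differentiableAt (hV.mem_nhds (hseg u hu))
    have hline : HasDerivAt (fun u : ℝ => (p.1, u)) ((0 : ℝ), (1 : ℝ)) u :=
      (hasDerivAt_const u p.1).prodMk (hasDerivAt_id u)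
    exact hdiff.hasFDerivAt.comp_hasDerivAt u hline
  have hcontfd : ContinuousOn (fderiv ℝ w) V :=
    hw.continuousOn_fderiv_of_isOpen hV le_rfl
  have hcont : ContinuousOn g' (Icc p.2 τ) := by
    apply ContinuousOn.clm_apply
    · exact hcontfd.comp (Continuous.continuousOn (by fun_prop)) (fun u hu => hseg u hu)
    · exact continuousOn_const
  have hint : IntervalIntegrable g' volume p.2 τ := by
    apply ContinuousOn.intervalIntegrable
    rwa [uIcc_of_le (le_of_lt hlt)]
  have key : ∫ u in p.2..τ, g' u = w (p.1, τ) - w (p.1, p.2) :=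
    integral_eq_sub_of_hasDerivAt (fun u hu => hder u ((uIcc_of_le (le_of_lt hlt)) ▸ hu)) hint
  rw [show ((p.1, p.2) : ℝ × ℝ) = p from rfl] at key
  set I : ℝ := ∫ u in p.2..τ, g' u with hI
  have hwp : w p = w (p.1, τ) - I := by linarith [key]
  have hreal : (w p) ^ 2 ≤ 2 * (w (p.1, τ)) ^ 2 + 2 * I ^ 2 := by
    rw [hwp]; nlinarith [sq_nonneg (w (p.1, τ) + I)]
  have hg'm : Measurable g' := by
    have h0 : Measurable (pd2 w) := measurable_fderiv_apply_const ℝ w ((0 : ℝ), (1 : ℝ))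
    exact h0.comp (by fun_prop)
  have habs : |I| ≤ ∫ u in p.2..τ, |g' u| := abs_integral_le_integral_abs (le_of_lt hlt)
  have h1 : ENNReal.ofReal (∫ u in p.2..τ, |g' u|)
      = ∫⁻ u in Ioc p.2 τ, ENNReal.ofReal (|g' u|) := by
    rw [intervalIntegral.integral_of_le (le_of_lt hlt)]
    exact ofReal_integral_eq_lintegral_ofReal hint.1.abs
      (Filter.Eventually.of_forall fun u => abs_nonneg _)
  set X : ℝ≥0∞ := ∫⁻ u in Ioc p.2 τ, ENNReal.ofReal ((g' u) ^ 2) with hX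
  have hCS : (∫⁻ u in Ioc p.2 τ, ENNReal.ofReal (|g' u|)) ^ 2
      ≤ X * ENNReal.ofReal (τ - p.2) := by
    have hconj : Real.HolderConjugate 2 2 := Real.HolderConjugate.two_two
    have hH := ENNReal.lintegral_mul_le_Lp_mul_Lq (volume.restrict (Ioc p.2 τ)) hconj
      (f := fun u => ENNReal.ofReal (|g' u|)) (g := fun _ => 1)
      (hg'm.abs.ennreal_ofReal.aemeasurable) aemeasurable_const
    simp only [Pi.mul_apply, Pi.one_apply, mul_one, ENNReal.one_rpow] at hH
    have e1 : (∫⁻ u in Ioc p.2 τ, ENNReal.ofReal (|g' u|) ^ (2 : ℝ)) = X := by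
      apply lintegral_congr
      intro u
      rw [ENNReal.ofReal_rpow_of_nonneg (abs_nonneg _) (by norm_num : (0:ℝ) ≤ 2)]
      congr 1
      rw [show ((2 : ℝ)) = ((2 : ℕ) : ℝ) by norm_num, Real.rpow_natCast, sq_abs]
    have e2 : (∫⁻ _u in Ioc p.2 τ, (1 : ℝ≥0∞)) = ENNReal.ofReal (τ - p.2) := by
      rw [setLIntegral_const, one_mul, Real.volume_Ioc]
    rw [e1, e2] at hH
    calc (∫⁻ u in Ioc p.2 τ, ENNReal.ofReal (|g' u|)) ^ 2
        ≤ (X ^ ((1 : ℝ) / 2) * ENNReal.ofReal (τ - p.2) ^ ((1 : ℝ) / 2)) ^ 2 :=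
          pow_le_pow_left' hH 2
      _ = X * ENNReal.ofReal (τ - p.2) := by
          rw [mul_pow, ← ENNReal.rpow_natCast (X ^ ((1 : ℝ) / 2)) 2,
            ← ENNReal.rpow_natCast (ENNReal.ofReal (τ - p.2) ^ ((1 : ℝ) / 2)) 2,
            ← ENNReal.rpow_mul, ← ENNReal.rpow_mul]
          norm_num
  set J : ℝ≥0∞ := ∫⁻ u, Ω.indicator (fun q => ENNReal.ofReal ((pd2 w q) ^ 2)) (p.1, u) with hJ
  have b3 : X ≤ J := by
    rw [hX, show (volume.restrict (Ioc p.2 τ)) = volume.restrict (Ioo p.2 τ) from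
      (Measure.restrict_congr_set Ioo_ae_eq_Ioc).symm, ← lintegral_indicator measurableSet_Ioo]
    apply lintegral_mono
    intro u
    simp only []
    by_cases hu : u ∈ Ioo p.2 τ
    · rw [indicator_of_mem hu]
      have huΩ : ((p.1, u) : ℝ × ℝ) ∈ Ω := hmem u (le_of_lt hu.1) hu.2
      rw [indicator_of_mem huΩ]
    · rw [indicator_of_notMem hu]
      exact zero_le
  -- assemble
  have hIb : ENNReal.ofReal (I ^ 2) ≤ ENNReal.ofReal (3 * R) * J := by
    have b0 : ENNReal.ofReal (I ^ 2) = (ENNReal.ofReal |I|) ^ 2 := by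
      rw [← ENNReal.ofReal_pow (abs_nonneg _), sq_abs]
    have b1 : ENNReal.ofReal |I| ≤ ∫⁻ u in Ioc p.2 τ, ENNReal.ofReal (|g' u|) := by
      rw [← h1]; exact ENNReal.ofReal_le_ofReal habs
    have hp2R : -R ≤ p.2 := (hbox hp).2.1
    calc ENNReal.ofReal (I ^ 2) = (ENNReal.ofReal |I|) ^ 2 := b0
      _ ≤ (∫⁻ u in Ioc p.2 τ, ENNReal.ofReal (|g' u|)) ^ 2 := pow_le_pow_left' b1 2
      _ ≤ X * ENNReal.ofReal (τ - p.2) := hCS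
      _ ≤ J * ENNReal.ofReal (3 * R) := by
          apply mul_le_mul' b3
          apply ENNReal.ofReal_le_ofReal
          linarith
      _ = ENNReal.ofReal (3 * R) * J := mul_comm _ _
  calc ENNReal.ofReal ((w p) ^ 2)
      ≤ ENNReal.ofReal (2 * (w (p.1, τ)) ^ 2 + 2 * I ^ 2) := ENNReal.ofReal_le_ofReal hreal
    _ = 2 * ENNReal.ofReal ((w (p.1, τ)) ^ 2) + 2 * ENNReal.ofReal (I ^ 2) := by
        rw [ENNReal.ofReal_add (by positivity) (by positivity),
          ENNReal.ofReal_mul (by norm_num : (0:ℝ) ≤ 2),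
          ENNReal.ofReal_mul (by norm_num : (0:ℝ) ≤ 2)]
        norm_num
    _ ≤ 2 * ENNReal.ofReal ((w (p.1, τ)) ^ 2) + ENNReal.ofReal (6 * R) * J := by
        apply add_le_add le_rfl
        calc 2 * ENNReal.ofReal (I ^ 2) ≤ 2 * (ENNReal.ofReal (3 * R) * J) :=
              mul_le_mul' le_rfl hIb
          _ = ENNReal.ofReal (6 * R) * J := by
              rw [← mul_assoc, show (6 : ℝ) * R = 2 * (3 * R) by ring,
                ENNReal.ofReal_mul (by norm_num : (0:ℝ) ≤ 2)]
              norm_num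


lemma pd_apply_eq {v : ℝ × ℝ → ℝ} {V : Set (ℝ × ℝ)} (hV : IsOpen V)
    (hv : ContDiffOn ℝ 2 v V) {q : ℝ × ℝ} (hq : q ∈ V) (a b : ℝ × ℝ) :
    fderiv ℝ (fun z => fderiv ℝ v z a) q b = fderiv ℝ (fderiv ℝ v) q b a := by
  have hF : DifferentiableAt ℝ (fderiv ℝ v) q := by
    have h1 : ContDiffOn ℝ 1 (fderiv ℝ v) V :=
      hv.fderiv_of_isOpen hV (by norm_num)
    exact (h1.differentiableOn one_ne_zero).differentiableAt (hV.mem_nhds hq)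
  have hL := (ContinuousLinearMap.apply ℝ ℝ a).hasFDerivAt.comp q hF.hasFDerivAt
  have : fderiv ℝ (fun z => fderiv ℝ v z a) q =
      (ContinuousLinearMap.apply ℝ ℝ a).comp (fderiv ℝ (fderiv ℝ v) q) := hL.fderiv
  rw [this]
  rfl

lemma pd_symm {v : ℝ × ℝ → ℝ} {V : Set (ℝ × ℝ)} (hV : IsOpen V)
    (hv : ContDiffOn ℝ 2 v V) {q : ℝ × ℝ} (hq : q ∈ V) :
    pd2 (pd1 v) q = pd1 (pd2 v) q := by
  have hF : DifferentiableAt ℝ (fderiv ℝ v) q := by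
    have h1 : ContDiffOn ℝ 1 (fderiv ℝ v) V :=
      hv.fderiv_of_isOpen hV (by norm_num)
    exact (h1.differentiableOn one_ne_zero).differentiableAt (hV.mem_nhds hq)
  have hev : ∀ᶠ y in nhds q, HasFDerivAt v (fderiv ℝ v y) y := by
    filter_upwards [hV.mem_nhds hq] with y hy
    exact ((hv.differentiableOn (by norm_num)).differentiableAt (hV.mem_nhds hy)).hasFDerivAt
  have hsymm := second_derivative_symmetric_of_eventually hev hF.hasFDerivAt
    ((1 : ℝ), (0 : ℝ)) ((0 : ℝ), (1 : ℝ))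
  have e1 : pd2 (pd1 v) q = fderiv ℝ (fderiv ℝ v) q (0, 1) (1, 0) :=
    pd_apply_eq hV hv hq _ _
  have e2 : pd1 (pd2 v) q = fderiv ℝ (fderiv ℝ v) q (1, 0) (0, 1) :=
    pd_apply_eq hV hv hq _ _
  rw [e1, e2, hsymm]


lemma lintegral_w_bound (hΩ : IsOpen Ω) (hR : 1 ≤ R)
    (hbox : Ω ⊆ Icc (-R) R ×ˢ Icc (-R) R)
    {L : ℝ} {x : ℝ → ℝ × ℝ} (hx : Continuous x)
    (hlip : LipschitzWith 1 (fun φ => (x φ).1))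
    (hfr : frontier Ω ⊆ x '' Icc 0 L)
    {V : Set (ℝ × ℝ)} (hV : IsOpen V) (hcl : closure Ω ⊆ V)
    {w : ℝ × ℝ → ℝ} (hw : ContDiffOn ℝ 1 w V) (hwm : Measurable w) :
    ∫⁻ p in Ω, ENNReal.ofReal ((w p) ^ 2)
      ≤ ENNReal.ofReal (18 * R * R) * (∫⁻ q in Ω, ENNReal.ofReal ((pd2 w q) ^ 2))
        + ENNReal.ofReal (6 * R) * ∫⁻ φ in Icc 0 L, ENNReal.ofReal ((w (x φ)) ^ 2) := by
  classical
  set f : ℝ × ℝ → ℝ≥0∞ := fun q => ENNReal.ofReal ((w q) ^ 2) with hf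
  have hfm : Measurable f := (hwm.pow_const 2).ennreal_ofReal
  set Hind : ℝ × ℝ → ℝ≥0∞ := Ω.indicator (fun q => ENNReal.ofReal ((pd2 w q) ^ 2)) with hHind
  have hpd2m : Measurable (pd2 w) := measurable_fderiv_apply_const ℝ w ((0 : ℝ), (1 : ℝ))
  have hHm : Measurable Hind := ((hpd2m.pow_const 2).ennreal_ofReal).indicator hΩ.measurableSet
  set E := exitMap Ω ((0 : ℝ), (0 : ℝ)) with hE
  have hEm : Measurable E := measurable_exitMap hΩ hbox _
  have hJm : Measurable fun s : ℝ => ∫⁻ u, Hind (s, u) := hHm.lintegral_prod_right'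
  have hgm : Measurable fun p : ℝ × ℝ =>
      2 * f (E p) + ENNReal.ofReal (6 * R) * ∫⁻ u, Hind (p.1, u) :=
    ((hfm.comp hEm).const_mul 2).add ((hJm.comp measurable_fst).const_mul _)
  have hpt : ∀ p ∈ Ω, f p ≤ 2 * f (E p) + ENNReal.ofReal (6 * R) * ∫⁻ u, Hind (p.1, u) := by
    intro p hp
    have := pointwise_bound hΩ hR hbox hV hcl hw hp
    rwa [hE, exitMap_eq hp]
  have hmain : ∫⁻ p in Ω, f p
      ≤ ∫⁻ p in Ω, (2 * f (E p) + ENNReal.ofReal (6 * R) * ∫⁻ u, Hind (p.1, u)) :=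
    setLIntegral_mono hgm hpt
  have hsplit : ∫⁻ p in Ω, (2 * f (E p) + ENNReal.ofReal (6 * R) * ∫⁻ u, Hind (p.1, u))
      = 2 * (∫⁻ p in Ω, f (E p))
        + ENNReal.ofReal (6 * R) * ∫⁻ p in Ω, (∫⁻ u, Hind (p.1, u)) := by
    rw [lintegral_add_left (f := fun p : ℝ × ℝ => 2 * f (E p))
      (show Measurable fun p : ℝ × ℝ => 2 * f (E p) from (hfm.comp hEm).const_mul 2)]
    rw [lintegral_const_mul 2 (show Measurable fun p : ℝ × ℝ => f (E p) from hfm.comp hEm),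
      lintegral_const_mul _
        (show Measurable fun p : ℝ × ℝ => ∫⁻ u, Hind (p.1, u) from hJm.comp measurable_fst)]
  have h1 : 2 * (∫⁻ p in Ω, f (E p))
      ≤ 2 * (ENNReal.ofReal (3 * R) * (∫⁻ φ in Icc 0 L, f (x φ))) :=
    mul_le_mul' le_rfl (lintegral_exit_le hΩ hR hbox hx hlip hfr hfm _)
  have h2 : ENNReal.ofReal (6 * R) * ∫⁻ p in Ω, (∫⁻ u, Hind (p.1, u))
      ≤ ENNReal.ofReal (6 * R) * (ENNReal.ofReal (3 * R) * ∫⁻ q, Hind q) :=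
    mul_le_mul' le_rfl (lintegral_slice_le hR hbox hHm)
  have hHtot : ∫⁻ q, Hind q = ∫⁻ q in Ω, ENNReal.ofReal ((pd2 w q) ^ 2) := by
    rw [hHind, lintegral_indicator hΩ.measurableSet]
  have hc1 : ENNReal.ofReal (6 * R) * ENNReal.ofReal (3 * R)
      = ENNReal.ofReal (18 * R * R) := by
    rw [← ENNReal.ofReal_mul (by linarith)]
    ring_nf
  have hc2 : (2 : ℝ≥0∞) * ENNReal.ofReal (3 * R) ≤ ENNReal.ofReal (6 * R) := by
    rw [show (2 : ℝ≥0∞) = ENNReal.ofReal 2 by norm_num,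
      ← ENNReal.ofReal_mul (by norm_num)]
    exact ENNReal.ofReal_le_ofReal (by linarith)
  calc ∫⁻ p in Ω, f p
      ≤ 2 * (∫⁻ p in Ω, f (E p))
        + ENNReal.ofReal (6 * R) * ∫⁻ p in Ω, (∫⁻ u, Hind (p.1, u)) := by
        rw [← hsplit]; exact hmain
    _ ≤ 2 * (ENNReal.ofReal (3 * R) * (∫⁻ φ in Icc 0 L, f (x φ)))
        + ENNReal.ofReal (6 * R) * (ENNReal.ofReal (3 * R) * ∫⁻ q, Hind q) :=
        by exact add_le_add h1 h2
    _ = 2 * ENNReal.ofReal (3 * R) * (∫⁻ φ in Icc 0 L, f (x φ))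
        + ENNReal.ofReal (18 * R * R) * ∫⁻ q in Ω, ENNReal.ofReal ((pd2 w q) ^ 2) := by
        rw [hHtot, ← mul_assoc, ← mul_assoc, hc1]
    _ ≤ ENNReal.ofReal (18 * R * R) * (∫⁻ q in Ω, ENNReal.ofReal ((pd2 w q) ^ 2))
        + ENNReal.ofReal (6 * R) * ∫⁻ φ in Icc 0 L, f (x φ) := by
        rw [add_comm]
        exact add_le_add le_rfl (mul_le_mul' hc2 le_rfl)


end GLH

open GLH

/-- Under the boundary setup, there are constants `C₁, C₂ > 0` such that
every `v` twice continuously differentiable on an open neighborhood of `closure Ω`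
satisfies `∫_Ω |∇v|² dx ≤ C₁·∫_Ω |D²v|² dx + C₂·∫₀^L |∇v(x(φ))|² dφ`. -/
theorem grad_le_hess_add_boundary
    (S : BoundarySetup) :
    ∃ C₁ > (0 : ℝ), ∃ C₂ > (0 : ℝ), ∀ (v : ℝ × ℝ → ℝ) (V : Set (ℝ × ℝ)),
      IsOpen V → closure S.Ω ⊆ V → ContDiffOn ℝ 2 v V →
      ∫ p in S.Ω, gradSq v p
        ≤ C₁ * (∫ p in S.Ω, hessSq v p) + C₂ * ∫ φ in (0 : ℝ)..S.L, gradSq v (S.x φ) := by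
  classical
  -- choose the bounding box radius R
  obtain ⟨r, hr⟩ := S.isBounded_Ω.subset_closedBall (0 : ℝ × ℝ)
  set R : ℝ := max r 1 with hRdef
  have hR : 1 ≤ R := le_max_right _ _
  have hRpos : 0 < R := lt_of_lt_of_le one_pos hR
  have hbox : S.Ω ⊆ Icc (-R) R ×ˢ Icc (-R) R := by
    intro p hp
    have h1 : ‖p‖ ≤ r := by
      have := hr hp
      rwa [Metric.mem_closedBall, dist_zero_right] at this
    have h2 : |p.1| ≤ R := le_trans (le_trans (norm_fst_le p) h1) (le_max_left _ _)
    have h3 : |p.2| ≤ R := le_trans (le_trans (norm_snd_le p) h1) (le_max_left _ _)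
    rw [abs_le] at h2 h3
    exact ⟨⟨h2.1, h2.2⟩, ⟨h3.1, h3.2⟩⟩
  have hΩ := S.isOpen_Ω
  -- Lipschitz property of the first coordinate of the curve
  have hxdiff : Differentiable ℝ S.x := S.x_smooth.differentiable (by norm_num)
  have hx1der : ∀ φ, HasDerivAt (fun φ => (S.x φ).1) ((deriv S.x φ).1) φ := by
    intro φ
    exact ((ContinuousLinearMap.fst ℝ ℝ ℝ).hasFDerivAt).comp_hasDerivAt φ
      (hxdiff φ).hasDerivAt
  have hlip : LipschitzWith 1 (fun φ => (S.x φ).1) := by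
    apply lipschitzWith_of_nnnorm_deriv_le (fun φ => (hx1der φ).differentiableAt)
    intro φ
    have hunit := S.x_unitSpeed φ
    have habs : |(deriv S.x φ).1| ≤ 1 := by nlinarith [sq_nonneg (deriv S.x φ).2, abs_nonneg (deriv S.x φ).1, sq_abs (deriv S.x φ).1]
    rw [← NNReal.coe_le_coe]
    rw [(hx1der φ).deriv]
    simpa [Real.norm_eq_abs] using habs
  have hfr : frontier S.Ω ⊆ S.x '' Icc 0 S.L := le_of_eq S.x_image.symm
  refine ⟨18 * R * R, by positivity, 6 * R, by positivity, ?_⟩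
  intro v V hV hcl hv
  have hm1 : Measurable (pd1 v) := measurable_fderiv_apply_const ℝ v _
  have hm2 : Measurable (pd2 v) := measurable_fderiv_apply_const ℝ v _
  have hFc : ContDiffOn ℝ 1 (fderiv ℝ v) V := hv.fderiv_of_isOpen hV (by norm_num)
  have hw1 : ContDiffOn ℝ 1 (pd1 v) V := hFc.clm_apply contDiffOn_const
  have hw2 : ContDiffOn ℝ 1 (pd2 v) V := hFc.clm_apply contDiffOn_const
  have hxc : Continuous S.x := S.x_smooth.continuous
  have hb1 := lintegral_w_bound hΩ hR hbox hxc hlip hfr hV hcl hw1 hm1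
  have hb2 := lintegral_w_bound hΩ hR hbox hxc hlip hfr hV hcl hw2 hm2
  have hm11 : Measurable (pd1 (pd1 v)) := measurable_fderiv_apply_const ℝ _ _
  have hm21 : Measurable (pd2 (pd1 v)) := measurable_fderiv_apply_const ℝ _ _
  have hm12 : Measurable (pd1 (pd2 v)) := measurable_fderiv_apply_const ℝ _ _
  have hm22 : Measurable (pd2 (pd2 v)) := measurable_fderiv_apply_const ℝ _ _
  have hgradm : Measurable (gradSq v) := (hm1.pow_const 2).add (hm2.pow_const 2)
  have hhessm : Measurable (hessSq v) :=
    ((hm11.pow_const 2).add ((hm12.pow_const 2).const_mul 2)).add (hm22.pow_const 2)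
  -- split of the gradient lintegral
  have hAsplit : ∫⁻ p in S.Ω, ENNReal.ofReal (gradSq v p)
      = (∫⁻ p in S.Ω, ENNReal.ofReal ((pd1 v p) ^ 2))
        + ∫⁻ p in S.Ω, ENNReal.ofReal ((pd2 v p) ^ 2) := by
    rw [← lintegral_add_left ((hm1.pow_const 2).ennreal_ofReal)]
    apply lintegral_congr
    intro p
    rw [← ENNReal.ofReal_add (by positivity) (by positivity)]
    rfl
  have hCsplit : (∫⁻ φ in Icc 0 S.L, ENNReal.ofReal ((pd1 v (S.x φ)) ^ 2))
        + (∫⁻ φ in Icc 0 S.L, ENNReal.ofReal ((pd2 v (S.x φ)) ^ 2))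
      = ∫⁻ φ in Icc 0 S.L, ENNReal.ofReal (gradSq v (S.x φ)) := by
    rw [← lintegral_add_left (show Measurable fun φ : ℝ => ENNReal.ofReal ((pd1 v (S.x φ)) ^ 2)
      from ((hm1.comp hxc.measurable).pow_const 2).ennreal_ofReal)]
    apply lintegral_congr
    intro φ
    rw [← ENNReal.ofReal_add (by positivity) (by positivity)]
    rfl
  have hhess : (∫⁻ q in S.Ω, ENNReal.ofReal ((pd2 (pd1 v) q) ^ 2))
        + (∫⁻ q in S.Ω, ENNReal.ofReal ((pd2 (pd2 v) q) ^ 2))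
      ≤ ∫⁻ q in S.Ω, ENNReal.ofReal (hessSq v q) := by
    rw [← lintegral_add_left ((hm21.pow_const 2).ennreal_ofReal)]
    apply setLIntegral_mono hhessm.ennreal_ofReal
    intro q hq
    have hqV : q ∈ V := hcl (subset_closure hq)
    rw [pd_symm hV hv hqV, ← ENNReal.ofReal_add (by positivity) (by positivity)]
    apply ENNReal.ofReal_le_ofReal
    unfold hessSq
    nlinarith [sq_nonneg (pd1 (pd1 v) q), sq_nonneg (pd1 (pd2 v) q)]
  set B : ℝ≥0∞ := ∫⁻ q in S.Ω, ENNReal.ofReal (hessSq v q) with hB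
  set C : ℝ≥0∞ := ∫⁻ φ in Icc 0 S.L, ENNReal.ofReal (gradSq v (S.x φ)) with hC
  have hENN : ∫⁻ p in S.Ω, ENNReal.ofReal (gradSq v p)
      ≤ ENNReal.ofReal (18 * R * R) * B + ENNReal.ofReal (6 * R) * C := by
    rw [hAsplit]
    calc (∫⁻ p in S.Ω, ENNReal.ofReal ((pd1 v p) ^ 2))
          + ∫⁻ p in S.Ω, ENNReal.ofReal ((pd2 v p) ^ 2)
        ≤ (ENNReal.ofReal (18 * R * R) * (∫⁻ q in S.Ω, ENNReal.ofReal ((pd2 (pd1 v) q) ^ 2))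
            + ENNReal.ofReal (6 * R) * ∫⁻ φ in Icc 0 S.L, ENNReal.ofReal ((pd1 v (S.x φ)) ^ 2))
          + (ENNReal.ofReal (18 * R * R) * (∫⁻ q in S.Ω, ENNReal.ofReal ((pd2 (pd2 v) q) ^ 2))
            + ENNReal.ofReal (6 * R) * ∫⁻ φ in Icc 0 S.L, ENNReal.ofReal ((pd2 v (S.x φ)) ^ 2)) :=
          add_le_add hb1 hb2
      _ = ENNReal.ofReal (18 * R * R)
            * ((∫⁻ q in S.Ω, ENNReal.ofReal ((pd2 (pd1 v) q) ^ 2))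
              + ∫⁻ q in S.Ω, ENNReal.ofReal ((pd2 (pd2 v) q) ^ 2))
          + ENNReal.ofReal (6 * R)
            * ((∫⁻ φ in Icc 0 S.L, ENNReal.ofReal ((pd1 v (S.x φ)) ^ 2))
              + ∫⁻ φ in Icc 0 S.L, ENNReal.ofReal ((pd2 v (S.x φ)) ^ 2)) := by
          rw [mul_add, mul_add]
          ring
      _ ≤ ENNReal.ofReal (18 * R * R) * B + ENNReal.ofReal (6 * R) * C := by
          rw [hCsplit]
          exact add_le_add (mul_le_mul' le_rfl hhess) le_rfl
  -- continuity and integrability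
  have hc1 : ContinuousOn (pd1 v) V := hw1.continuousOn
  have hc2 : ContinuousOn (pd2 v) V := hw2.continuousOn
  have hgradc : ContinuousOn (gradSq v) V := (hc1.pow 2).add (hc2.pow 2)
  have hc11 : ContinuousOn (pd1 (pd1 v)) V :=
    (hw1.continuousOn_fderiv_of_isOpen hV le_rfl).clm_apply continuousOn_const
  have hc21 : ContinuousOn (pd2 (pd1 v)) V :=
    (hw1.continuousOn_fderiv_of_isOpen hV le_rfl).clm_apply continuousOn_const
  have hc12 : ContinuousOn (pd1 (pd2 v)) V :=
    (hw2.continuousOn_fderiv_of_isOpen hV le_rfl).clm_apply continuousOn_const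
  have hc22 : ContinuousOn (pd2 (pd2 v)) V :=
    (hw2.continuousOn_fderiv_of_isOpen hV le_rfl).clm_apply continuousOn_const
  have hhessc : ContinuousOn (hessSq v) V := by
    apply ContinuousOn.add
    apply ContinuousOn.add (hc11.pow 2)
    · exact continuousOn_const.mul (hc12.pow 2)
    · exact hc22.pow 2
  have hK : IsCompact (closure S.Ω) :=
    Metric.isCompact_of_isClosed_isBounded isClosed_closure S.isBounded_Ω.closure
  have higrad : IntegrableOn (gradSq v) S.Ω :=
    (((hgradc.mono hcl).integrableOn_compact hK).mono_set subset_closure)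
  have hihess : IntegrableOn (hessSq v) S.Ω :=
    (((hhessc.mono hcl).integrableOn_compact hK).mono_set subset_closure)
  have hmapV : ∀ φ ∈ Icc (0:ℝ) S.L, S.x φ ∈ V := by
    intro φ hφ
    apply hcl
    exact frontier_subset_closure (S.x_image ▸ Set.mem_image_of_mem S.x hφ)
  have hbc : ContinuousOn (fun φ => gradSq v (S.x φ)) (Icc 0 S.L) :=
    hgradc.comp hxc.continuousOn hmapV
  have hibd : IntegrableOn (fun φ => gradSq v (S.x φ)) (Icc 0 S.L) :=
    hbc.integrableOn_compact isCompact_Icc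
  -- convert to real integrals
  have e1 : ∫ p in S.Ω, gradSq v p = (∫⁻ p in S.Ω, ENNReal.ofReal (gradSq v p)).toReal :=
    integral_eq_lintegral_of_nonneg_ae
      (Filter.Eventually.of_forall fun p => by unfold gradSq; positivity)
      hgradm.aestronglyMeasurable
  have e2 : ∫ p in S.Ω, hessSq v p = B.toReal :=
    integral_eq_lintegral_of_nonneg_ae
      (Filter.Eventually.of_forall fun p => by unfold hessSq; positivity)
      hhessm.aestronglyMeasurable
  have e3 : ∫ φ in (0:ℝ)..S.L, gradSq v (S.x φ) = C.toReal := by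
    rw [intervalIntegral.integral_of_le (le_of_lt S.L_pos), hC,
      show (volume.restrict (Ioc (0:ℝ) S.L)) = volume.restrict (Icc 0 S.L) from
        Measure.restrict_congr_set Ioc_ae_eq_Icc]
    exact integral_eq_lintegral_of_nonneg_ae
      (Filter.Eventually.of_forall fun φ => by unfold gradSq; positivity)
      ((hgradm.comp hxc.measurable).aestronglyMeasurable)
  have hBfin : B ≠ ∞ := hihess.lintegral_lt_top.ne
  have hCfin : C ≠ ∞ := by
    have := hibd.lintegral_lt_top
    exact this.ne
  have hRHSfin : ENNReal.ofReal (18 * R * R) * B + ENNReal.ofReal (6 * R) * C ≠ ∞ :=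
    ENNReal.add_ne_top.mpr
      ⟨ENNReal.mul_ne_top ENNReal.ofReal_ne_top hBfin,
        ENNReal.mul_ne_top ENNReal.ofReal_ne_top hCfin⟩
  rw [e1, e2, e3]
  calc (∫⁻ p in S.Ω, ENNReal.ofReal (gradSq v p)).toReal
      ≤ (ENNReal.ofReal (18 * R * R) * B + ENNReal.ofReal (6 * R) * C).toReal :=
        ENNReal.toReal_mono hRHSfin hENN
    _ = 18 * R * R * B.toReal + 6 * R * C.toReal := by
        rw [ENNReal.toReal_add (ENNReal.mul_ne_top ENNReal.ofReal_ne_top hBfin)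
            (ENNReal.mul_ne_top ENNReal.ofReal_ne_top hCfin),
          ENNReal.toReal_mul, ENNReal.toReal_mul,
          ENNReal.toReal_ofReal (by positivity), ENNReal.toReal_ofReal (by positivity)]
end

section
/- Let φ₀ ∈ ℝ, let x : ℝ → ℝ² be differentiable at φ₀, let ℓ : ℝ → ℝ² be differentiable at φ₀ with |ℓ(φ₀)| = 1, and let v : ℝ² → ℝ be twice continuously differentiable on a neighborhood of p := x(φ₀). Define n := (x₂'(φ₀), −x₁'(φ₀)), g(φ) := ∂₁v(x(φ))·ℓ₁(φ) + ∂₂v(x(φ))·ℓ₂(φ) (the derivative of v along ℓ) and h(φ) := −∂₁v(x(φ))·ℓ₂(φ) + ∂₂v(x(φ))·ℓ₁(φ) (the derivative of v along ℓ^⊥ := (−ℓ₂, ℓ₁)). Then g and h are differentiable at φ₀ and n₁·(∂₁v(p)·∂₂₂v(p) − ∂₂v(p)·∂₁₂v(p)) − n₂·(∂₁v(p)·∂₁₂v(p) − ∂₂v(p)·∂₁₁v(p)) = (g(φ₀)² + h(φ₀)²)·(ℓ₁(φ₀)·ℓ₂'(φ₀) − ℓ₂(φ₀)·ℓ₁'(φ₀))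 + g(φ₀)·h'(φ₀) − h(φ₀)·g'(φ₀). -/
/-- The directional derivative of `v` along `ℓ`, evaluated along the curve `x`:
`g(φ) = ∂₁v(x(φ))·ℓ₁(φ) + ∂₂v(x(φ))·ℓ₂(φ)`. -/
noncomputable def derAlong (v : ℝ × ℝ → ℝ) (x ℓ : ℝ → ℝ × ℝ) (φ : ℝ) : ℝ :=
  pd1 v (x φ) * (ℓ φ).1 + pd2 v (x φ) * (ℓ φ).2

/-- The directional derivative of `v` along `ℓ^⊥ = (−ℓ₂, ℓ₁)`, evaluated along the curve
`x`: `h(φ) = −∂₁v(x(φ))·ℓ₂(φ) + ∂₂v(x(φ))·ℓ₁(φ)`. -/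
noncomputable def derAlongPerp (v : ℝ × ℝ → ℝ) (x ℓ : ℝ → ℝ × ℝ) (φ : ℝ) : ℝ :=
  -(pd1 v (x φ)) * (ℓ φ).2 + pd2 v (x φ) * (ℓ φ).1

/-- Let `x` be differentiable at `φ₀`, `ℓ` differentiable at `φ₀` with
`|ℓ(φ₀)| = 1`, and `v` twice continuously differentiable on a neighborhood of
`p := x(φ₀)`. With `n := (x₂'(φ₀), −x₁'(φ₀))`, `g := ∂v/∂ℓ ∘ x` and `h := ∂v/∂ℓ^⊥ ∘ x`,
the functions `g, h` are differentiable at `φ₀` and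
`n₁·(∂₁v·∂₂₂v − ∂₂v·∂₁₂v)(p) − n₂·(∂₁v·∂₁₂v − ∂₂v·∂₁₁v)(p)
  = (g² + h²)·(ℓ₁ℓ₂' − ℓ₂ℓ₁') + g·h' − h·g'` at `φ₀`. -/
theorem boundary_integrand_eq_oblique_form
    (φ₀ : ℝ) (x ℓ : ℝ → ℝ × ℝ) (v : ℝ × ℝ → ℝ)
    (hx : DifferentiableAt ℝ x φ₀) (hℓ : DifferentiableAt ℝ ℓ φ₀)
    (hℓunit : (ℓ φ₀).1 ^ 2 + (ℓ φ₀).2 ^ 2 = 1)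
    (U : Set (ℝ × ℝ)) (hU : IsOpen U) (hpU : x φ₀ ∈ U) (hv : ContDiffOn ℝ 2 v U) :
    DifferentiableAt ℝ (derAlong v x ℓ) φ₀ ∧
    DifferentiableAt ℝ (derAlongPerp v x ℓ) φ₀ ∧
    (deriv x φ₀).2 *
        (pd1 v (x φ₀) * pd2 (pd2 v) (x φ₀) - pd2 v (x φ₀) * pd1 (pd2 v) (x φ₀))
      - (-(deriv x φ₀).1) *
        (pd1 v (x φ₀) * pd1 (pd2 v) (x φ₀) - pd2 v (x φ₀) * pd1 (pd1 v) (x φ₀))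
      = ((derAlong v x ℓ φ₀) ^ 2 + (derAlongPerp v x ℓ φ₀) ^ 2) *
          ((ℓ φ₀).1 * deriv (fun φ => (ℓ φ).2) φ₀ - (ℓ φ₀).2 * deriv (fun φ => (ℓ φ).1) φ₀)
        + derAlong v x ℓ φ₀ * deriv (derAlongPerp v x ℓ) φ₀
        - derAlongPerp v x ℓ φ₀ * deriv (derAlong v x ℓ) φ₀ := by
  have hmem : U ∈ nhds (x φ₀) := hU.mem_nhds hpU
  have hvC2 : ContDiffAt ℝ 2 v (x φ₀) := hv.contDiffAt hmem
  have hfC1 : ContDiffOn ℝ 1 (fderiv ℝ v) U :=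
    hv.fderiv_of_isOpen hU (by norm_num)
  have hfd : DifferentiableAt ℝ (fderiv ℝ v) (x φ₀) :=
    (hfC1.contDiffAt hmem).differentiableAt one_ne_zero
  set F := fderiv ℝ (fderiv ℝ v) (x φ₀) with hF
  -- derivative of φ ↦ fderiv v (x φ) e
  have key : ∀ e : ℝ × ℝ, HasDerivAt (fun φ => fderiv ℝ v (x φ) e)
      (F (deriv x φ₀) e) φ₀ := by
    intro e
    have h1 : HasFDerivAt (fun q => fderiv ℝ v q e)
        ((ContinuousLinearMap.apply ℝ ℝ e).comp F) (x φ₀) :=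
      (ContinuousLinearMap.apply ℝ ℝ e).hasFDerivAt.comp _ hfd.hasFDerivAt
    have := h1.comp_hasDerivAt φ₀ hx.hasDerivAt
    exact this
  -- second partials as entries of F
  have hpd : ∀ e : ℝ × ℝ, fderiv ℝ (fun q => fderiv ℝ v q e) (x φ₀)
      = (ContinuousLinearMap.apply ℝ ℝ e).comp F := by
    intro e
    exact ((ContinuousLinearMap.apply ℝ ℝ e).hasFDerivAt.comp _ hfd.hasFDerivAt).fderiv
  have hsymm : IsSymmSndFDerivAt ℝ v (x φ₀) := hvC2.isSymmSndFDerivAt (by simp)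
  -- entries
  set P := pd1 v (x φ₀) with hP
  set Q := pd2 v (x φ₀) with hQ
  set A := F (1, 0) (1, 0) with hA
  set B := F (1, 0) (0, 1) with hB
  set C := F (0, 1) (0, 1) with hC
  have hBA : F (0, 1) (1, 0) = B := hsymm (0, 1) (1, 0)
  have e1 : pd1 v = fun q => fderiv ℝ v q (1, 0) := rfl
  have e2 : pd2 v = fun q => fderiv ℝ v q (0, 1) := rfl
  have hF11 : pd1 (pd1 v) (x φ₀) = A := by
    simp only [pd1, e1]; rw [hpd (1, 0)]; rfl
  have hF12 : pd1 (pd2 v) (x φ₀) = B := by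
    simp only [pd1, e2]; rw [hpd (0, 1)]; rfl
  have hF22 : pd2 (pd2 v) (x φ₀) = C := by
    simp only [pd2, e2]; rw [hpd (0, 1)]; rfl
  -- decompose F (deriv x φ₀) e
  have hdec : ∀ e : ℝ × ℝ, F (deriv x φ₀) e
      = (deriv x φ₀).1 * F (1, 0) e + (deriv x φ₀).2 * F (0, 1) e := by
    intro e
    have : deriv x φ₀ = (deriv x φ₀).1 • ((1:ℝ), (0:ℝ)) + (deriv x φ₀).2 • ((0:ℝ), (1:ℝ)) := by
      simp [Prod.ext_iff]
    rw [this, map_add, map_smul, map_smul]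
    simp [smul_eq_mul]
  have hgP : HasDerivAt (fun φ => fderiv ℝ v (x φ) (1, 0))
      ((deriv x φ₀).1 * A + (deriv x φ₀).2 * B) φ₀ := by
    have := key (1, 0)
    rwa [hdec, hBA, ← hA] at this
  have hgQ : HasDerivAt (fun φ => fderiv ℝ v (x φ) (0, 1))
      ((deriv x φ₀).1 * B + (deriv x φ₀).2 * C) φ₀ := by
    have := key (0, 1)
    rwa [hdec, ← hB, ← hC] at this
  -- components of ℓ
  have hℓ1 : HasDerivAt (fun φ => (ℓ φ).1) (deriv ℓ φ₀).1 φ₀ := by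
    have := (ContinuousLinearMap.fst ℝ ℝ ℝ).hasFDerivAt.comp_hasDerivAt φ₀ hℓ.hasDerivAt
    exact this
  have hℓ2 : HasDerivAt (fun φ => (ℓ φ).2) (deriv ℓ φ₀).2 φ₀ := by
    have := (ContinuousLinearMap.snd ℝ ℝ ℝ).hasFDerivAt.comp_hasDerivAt φ₀ hℓ.hasDerivAt
    exact this
  set l1 := (ℓ φ₀).1
  set l2 := (ℓ φ₀).2
  set x1 := (deriv x φ₀).1
  set x2 := (deriv x φ₀).2
  set l1' := (deriv ℓ φ₀).1
  set l2' := (deriv ℓ φ₀).2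
  have hg : HasDerivAt (derAlong v x ℓ)
      ((x1 * A + x2 * B) * l1 + P * l1' + ((x1 * B + x2 * C) * l2 + Q * l2')) φ₀ := by
    unfold derAlong pd1 pd2
    exact (hgP.mul hℓ1).add (hgQ.mul hℓ2)
  have hh : HasDerivAt (derAlongPerp v x ℓ)
      ((-(x1 * A + x2 * B)) * l2 + (-P) * l2' + ((x1 * B + x2 * C) * l1 + Q * l1')) φ₀ := by
    unfold derAlongPerp pd1 pd2
    exact ((hgP.neg.mul hℓ2).add (hgQ.mul hℓ1))
  refine ⟨hg.differentiableAt, hh.differentiableAt, ?_⟩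
  rw [hg.deriv, hh.deriv, hℓ1.deriv, hℓ2.deriv, hF11, hF12, hF22]
  have hgval : derAlong v x ℓ φ₀ = P * l1 + Q * l2 := rfl
  have hhval : derAlongPerp v x ℓ φ₀ = -P * l2 + Q * l1 := rfl
  rw [hgval, hhval]
  have hun : l1 ^ 2 + l2 ^ 2 = 1 := hℓunit
  linear_combination -((P^2 + Q^2) * (l1 * l2' - l2 * l1')
    + (P * (x1 * B + x2 * C) - Q * (x1 * A + x2 * B))) * hun
end
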